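/- For any n×n real matrix A, the limit as p → ∞ of (Σ_{σ∈S_n} sgn(σ) Π_{i∈[n]} a_{i,σ(i)}^{2p+1})^{1/(2p+1)} (real odd roots) exists and equals ⊞_{σ∈S_n} ( sgn(σ) Π_{i∈[n]} a_{i,σ(i)} ), the 'determinant in limit' |A|_∞. -/

import Mathlib

open scoped Classical

/-- ξ_I[x](α): signed count of occurrences of α among the x i, i ∈ I. -/
noncomputable def xiF {ι : Type*} (I : Finset ι) (x : ι → ℝ) (α : ℝ) : ℤ :=
  ((I.filter fun i => x i = α).card : ℤ) - ((I.filter fun i => x i = -α).card : ℤ)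

/-- the n-ary limit operation F_I, i.e. ⊞_{i∈I} x_i. -/
noncomputable def FF {ι : Type*} (I : Finset ι) (x : ι → ℝ) : ℝ :=
  if h : (I.filter fun j => xiF I x (x j) ≠ 0).Nonempty then
    if 0 < xiF I x ((I.filter fun j => xiF I x (x j) ≠ 0).sup' h fun i => |x i|) then
      (I.filter fun j => xiF I x (x j) ≠ 0).sup' h x
    else if xiF I x ((I.filter fun j => xiF I x (x j) ≠ 0).sup' h fun i => |x i|) < 0 then
      (I.filter fun j => xiF I x (x j) ≠ 0).inf' h x
    else 0
  else 0

/-- determinant in limit -/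
noncomputable def detInf {n : ℕ} (A : Matrix (Fin n) (Fin n) ℝ) : ℝ :=
  FF Finset.univ fun σ : Equiv.Perm (Fin n) =>
    ((Equiv.Perm.sign σ : ℤ) : ℝ) * ∏ i, A i (σ i)

/-!
Grouping the terms by absolute value, `∑ i, x i ^ k = ∑ β, ξ(β) β ^ k` for odd `k`, where `β` runs
over the absolute values `|x j|` with `ξ(x j) ≠ 0`. The largest of them, `M`, dominates: the sum is
`ξ(M) M ^ k (1 + o(1))`, so its real `k`-th root tends to `M` if `ξ(M) > 0` and to `-M` if
`ξ(M) < 0`, which is `⊞ i, x i` in either case.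
-/

open Filter Topology

lemma tendsto_two_mul_add_one_atTop : Tendsto (fun p : ℕ => 2 * p + 1) atTop atTop :=
  StrictMono.tendsto_atTop fun _ _ h => by omega

lemma tendsto_sum_mul_pow_div_pow {T : Finset ℝ} (c : ℝ → ℝ) {M : ℝ}
    (hT : ∀ β ∈ T, |β| < M) :
    Tendsto (fun p : ℕ => (∑ β ∈ T, c β * β ^ (2 * p + 1)) / M ^ (2 * p + 1)) atTop (𝓝 0) := by
  have hterm : ∀ β ∈ T, Tendsto (fun p : ℕ => c β * (β / M) ^ (2 * p + 1)) atTop (𝓝 0) := by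
    intro β hβ
    have hM : 0 < M := (abs_nonneg β).trans_lt (hT β hβ)
    have hlt : |β / M| < 1 := by
      rw [abs_div, abs_of_pos hM, div_lt_one hM]
      exact hT β hβ
    simpa using ((tendsto_pow_atTop_nhds_zero_of_abs_lt_one hlt).comp
      tendsto_two_mul_add_one_atTop).const_mul (c β)
  simpa [Finset.sum_div, div_pow, mul_div_assoc] using tendsto_finsetSum T hterm

lemma tendsto_of_pow_eq_mul_pow_add {r R : ℕ → ℝ} {a M : ℝ} (ha : 0 < a) (hM : 0 < M)
    (hR : Tendsto (fun p => R p / M ^ (2 * p + 1)) atTop (𝓝 0))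
    (hr : ∀ p, r p ^ (2 * p + 1) = a * M ^ (2 * p + 1) + R p) :
    Tendsto r atTop (𝓝 M) := by
  set w : ℕ → ℝ := fun p => a + R p / M ^ (2 * p + 1)
  have hw : Tendsto w atTop (𝓝 a) := by simpa using hR.const_add a
  have hexp : Tendsto (fun p : ℕ => ((2 * p + 1 : ℕ) : ℝ)⁻¹) atTop (𝓝 0) :=
    tendsto_inv_atTop_zero.comp (tendsto_natCast_atTop_atTop.comp tendsto_two_mul_add_one_atTop)
  have hroot : Tendsto (fun p => w p ^ ((2 * p + 1 : ℕ) : ℝ)⁻¹) atTop (𝓝 1) := by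
    simpa using hw.rpow hexp (Or.inl ha.ne')
  have heq : ∀ᶠ p in atTop, M * w p ^ ((2 * p + 1 : ℕ) : ℝ)⁻¹ = r p := by
    filter_upwards [hw.eventually (eventually_gt_nhds ha)] with p hwp
    have hMk : M ^ (2 * p + 1) ≠ 0 := by positivity
    rw [← (Odd.pow_inj (n := 2 * p + 1) ⟨p, rfl⟩), hr p, mul_pow,
      ← Real.rpow_natCast (w p ^ _), ← Real.rpow_mul hwp.le,
      inv_mul_cancel₀ (by positivity), Real.rpow_one, mul_add, mul_div_cancel₀ _ hMk]
    ring
  simpa using (hroot.const_mul M).congr' heq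

section SignedCount

variable {ι : Type*} (I : Finset ι) (x : ι → ℝ)

lemma xiF_neg (α : ℝ) : xiF I x (-α) = -xiF I x α := by
  simp [xiF]

lemma xiF_zero : xiF I x 0 = 0 := by
  simp [xiF]

lemma xiF_abs_ne_zero_iff (α : ℝ) : xiF I x |α| ≠ 0 ↔ xiF I x α ≠ 0 := by
  rcases abs_choice α with h | h <;> simp [h, xiF_neg]

lemma exists_eq_of_xiF_pos {α : ℝ} (h : 0 < xiF I x α) : ∃ i ∈ I, x i = α := by
  obtain ⟨i, hi⟩ : (I.filter fun i => x i = α).Nonempty := by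
    rw [← Finset.card_pos]
    unfold xiF at h
    omega
  exact ⟨i, (Finset.mem_filter.1 hi).1, (Finset.mem_filter.1 hi).2⟩

lemma sum_abs_fiber_pow {k : ℕ} (hk : Odd k) {β : ℝ} (hβ : 0 ≤ β) :
    ∑ i ∈ I with |x i| = β, x i ^ k = xiF I x β * β ^ k := by
  rcases hβ.eq_or_lt with rfl | hβ
  · rw [xiF_zero, Finset.sum_eq_zero fun i hi => by
      simp [abs_eq_zero.1 (Finset.mem_filter.1 hi).2, hk.pos.ne']]
    simp
  have hsplit : I.filter (fun i => |x i| = β)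
      = I.filter (fun i => x i = β) ∪ I.filter (fun i => x i = -β) := by
    rw [← Finset.filter_or]
    exact Finset.filter_congr fun i _ => abs_eq hβ.le
  have hdisj : Disjoint (I.filter fun i => x i = β) (I.filter fun i => x i = -β) :=
    Finset.disjoint_filter.2 fun i _ h1 h2 => by linarith
  have hcount (γ : ℝ) : ∑ i ∈ I with x i = γ, x i ^ k = (I.filter (x · = γ)).card * γ ^ k := by
    rw [Finset.sum_eq_card_nsmul (s := I.filter (x · = γ)) (f := fun i => x i ^ k) (b := γ ^ k)
      fun i hi => by rw [(Finset.mem_filter.1 hi).2], nsmul_eq_mul]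
  rw [hsplit, Finset.sum_union hdisj, hcount, hcount, hk.neg_pow, xiF]
  push_cast
  ring

/-- The set `J` in the definition of `⊞`. -/
noncomputable abbrev supportXi : Finset ι := I.filter fun j => xiF I x (x j) ≠ 0

lemma sum_pow_eq_sum_xiF {k : ℕ} (hk : Odd k) :
    ∑ i ∈ I, x i ^ k = ∑ β ∈ (supportXi I x).image (|x ·|), xiF I x β * β ^ k := by
  have himage : (supportXi I x).image (|x ·|)
      = (I.image (|x ·|)).filter fun β => xiF I x β ≠ 0 := by
    ext β
    simp only [Finset.mem_image, Finset.mem_filter]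
    constructor
    · rintro ⟨i, ⟨hi, hxi⟩, rfl⟩
      exact ⟨⟨i, hi, rfl⟩, (xiF_abs_ne_zero_iff I x _).2 hxi⟩
    · rintro ⟨⟨i, hi, rfl⟩, hxi⟩
      exact ⟨i, ⟨hi, (xiF_abs_ne_zero_iff I x _).1 hxi⟩, rfl⟩
  rw [himage, Finset.sum_filter_of_ne (p := fun β => xiF I x β ≠ 0)
      fun β _ h => Int.cast_ne_zero.1 (left_ne_zero_of_mul h),
    ← Finset.sum_fiberwise_of_maps_to fun i hi => Finset.mem_image_of_mem (|x ·|) hi]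
  refine Finset.sum_congr rfl fun β hβ => sum_abs_fiber_pow I x hk ?_
  obtain ⟨i, -, rfl⟩ := Finset.mem_image.1 hβ
  exact abs_nonneg _

section Dominant

variable (h : (supportXi I x).Nonempty)

noncomputable abbrev supAbs : ℝ := (supportXi I x).sup' h (|x ·|)

lemma supAbs_mem_image : supAbs I x h ∈ (supportXi I x).image (|x ·|) := by
  obtain ⟨j, hj, hjM⟩ := Finset.exists_mem_eq_sup' h (|x ·|)
  rw [supAbs, hjM]
  exact Finset.mem_image_of_mem _ hj

lemma xiF_supAbs_ne_zero : xiF I x (supAbs I x h) ≠ 0 := by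
  obtain ⟨j, hj, hjM⟩ := Finset.exists_mem_eq_sup' h (|x ·|)
  rw [supAbs, hjM, xiF_abs_ne_zero_iff]
  exact (Finset.mem_filter.1 hj).2

lemma supAbs_pos : 0 < supAbs I x h := by
  refine lt_of_le_of_ne ?_ fun hM0 => xiF_supAbs_ne_zero I x h ?_
  · obtain ⟨j, hj⟩ := h
    exact (abs_nonneg _).trans (Finset.le_sup' (|x ·|) hj)
  · rw [← hM0, xiF_zero]

lemma abs_lt_supAbs :
    ∀ β ∈ ((supportXi I x).image (|x ·|)).erase (supAbs I x h), |β| < supAbs I x h := by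
  intro β hβ
  obtain ⟨i, hi, rfl⟩ := Finset.mem_image.1 (Finset.mem_of_mem_erase hβ)
  rw [abs_abs]
  exact lt_of_le_of_ne (Finset.le_sup' (|x ·|) hi) (Finset.ne_of_mem_erase hβ)

lemma FF_eq_of_xiF_pos (hpos : 0 < xiF I x (supAbs I x h)) : FF I x = supAbs I x h := by
  rw [FF, dif_pos h, if_pos hpos]
  refine le_antisymm (Finset.sup'_mono_fun fun i _ => le_abs_self (x i)) ?_
  obtain ⟨i, hi, hxi⟩ := exists_eq_of_xiF_pos I x hpos
  rw [← hxi]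
  exact Finset.le_sup' x (Finset.mem_filter.2 ⟨hi, hxi ▸ hpos.ne'⟩)

lemma FF_eq_of_xiF_neg (hneg : xiF I x (supAbs I x h) < 0) : FF I x = -supAbs I x h := by
  rw [FF, dif_pos h, if_neg hneg.not_gt, if_pos hneg]
  refine le_antisymm ?_ (Finset.le_inf' h x fun i hi => ?_)
  · obtain ⟨i, hi, hxi⟩ := exists_eq_of_xiF_pos I x (by rwa [xiF_neg, neg_pos])
    rw [← hxi]
    refine Finset.inf'_le x (Finset.mem_filter.2 ⟨hi, ?_⟩)
    rw [hxi, xiF_neg]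
    exact neg_ne_zero.2 hneg.ne
  · have := Finset.le_sup' (|x ·|) hi
    linarith [neg_abs_le (x i)]

end Dominant

end SignedCount

theorem tendsto_of_pow_eq_sum_pow {ι : Type*} (I : Finset ι) (x : ι → ℝ) (r : ℕ → ℝ)
    (hr : ∀ p : ℕ, r p ^ (2 * p + 1) = ∑ i ∈ I, x i ^ (2 * p + 1)) :
    Tendsto r atTop (𝓝 (FF I x)) := by
  set B := (supportXi I x).image (|x ·|)
  have hsum : ∀ p : ℕ, r p ^ (2 * p + 1) = ∑ β ∈ B, xiF I x β * β ^ (2 * p + 1) := fun p => by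
    rw [hr, sum_pow_eq_sum_xiF I x ⟨p, rfl⟩]
  by_cases h : (supportXi I x).Nonempty
  swap
  · have hB : B = ∅ := by simp [B, Finset.not_nonempty_iff_eq_empty.1 h]
    have hr0 : r = fun _ => 0 := funext fun p =>
      pow_eq_zero_iff (n := 2 * p + 1) (by omega) |>.1 <| by rw [hsum, hB, Finset.sum_empty]
    rw [FF, dif_neg h, hr0]
    exact tendsto_const_nhds
  set M := supAbs I x h
  have hR := tendsto_sum_mul_pow_div_pow (fun β => (xiF I x β : ℝ)) (abs_lt_supAbs I x h)
  have hsplit : ∀ p : ℕ, r p ^ (2 * p + 1) = xiF I x M * M ^ (2 * p + 1)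
      + ∑ β ∈ B.erase M, xiF I x β * β ^ (2 * p + 1) := fun p => by
    rw [hsum]
    exact (Finset.add_sum_erase B _ (supAbs_mem_image I x h)).symm
  rcases (xiF_supAbs_ne_zero I x h).lt_or_gt with hneg | hpos
  · rw [FF_eq_of_xiF_neg I x h hneg]
    have hneg' : 0 < -(xiF I x M : ℝ) := by exact_mod_cast neg_pos.2 hneg
    have hneg_r : Tendsto (fun p => -r p) atTop (𝓝 M) :=
      tendsto_of_pow_eq_mul_pow_add
        (R := fun p => -∑ β ∈ B.erase M, xiF I x β * β ^ (2 * p + 1)) hneg' (supAbs_pos I x h)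
        (by simpa [neg_div] using hR.neg) fun p => by
          rw [Odd.neg_pow ⟨p, rfl⟩, hsplit]
          ring
    simpa using hneg_r.neg
  · rw [FF_eq_of_xiF_pos I x h hpos]
    exact tendsto_of_pow_eq_mul_pow_add (by exact_mod_cast hpos) (supAbs_pos I x h) hR hsplit

theorem stmt_13 {n : ℕ} (A : Matrix (Fin n) (Fin n) ℝ) (r : ℕ → ℝ)
    (hr : ∀ p : ℕ, (r p) ^ (2 * p + 1) =
      ∑ σ : Equiv.Perm (Fin n),
        ((Equiv.Perm.sign σ : ℤ) : ℝ) * ∏ i, (A i (σ i)) ^ (2 * p + 1)) :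
    Filter.Tendsto r Filter.atTop (nhds (detInf A)) := by
  refine tendsto_of_pow_eq_sum_pow _ _ r fun p => ?_
  rw [hr p]
  refine Finset.sum_congr rfl fun σ _ => ?_
  rw [mul_pow, Finset.prod_pow, ← Int.cast_pow, ← Units.val_pow_eq_pow_val,
    Int.units_pow_eq_pow_mod_two]
  simp
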